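/- arXiv:2206.11852 — 2 statements merged into one kernel-verified Lean document; each statement's English description precedes it below -/
import Mathlib

section
/- The robustness of the three-qubit W state relative to the fully separable states equals 2: R_FS(|W⟩⟨W|) = 2, where |W⟩ = (|001⟩+|010⟩+|100⟩)/√3 in (ℂ²)^{⊗3}. -/
open Matrix Finset
open scoped ComplexOrder

attribute [local instance] Classical.propDecidable

noncomputable section

/-- The rank-one matrix `|v⟩⟨v|` associated to a vector `v`. -/
def vecProj {D : Type*} [Fintype D] (v : D → ℂ) : Matrix D D ℂ :=
  Matrix.of fun i j => v i * star (v j)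

/-- `v` is a unit vector. -/
def UnitVec {D : Type*} [Fintype D] (v : D → ℂ) : Prop :=
  ∑ i, star (v i) * v i = 1

/-- A quantum state: positive semidefinite matrix of trace one. -/
def IsState {D : Type*} [Fintype D] [DecidableEq D] (ρ : Matrix D D ℂ) : Prop :=
  ρ.PosSemidef ∧ ρ.trace = 1

/-- A vector on a multipartite system is fully product if it is a tensor product of
single-party vectors. -/
def IsProdVec {ι : Type*} [Fintype ι] {Idx : ι → Type*} (v : (∀ i, Idx i) → ℂ) : Prop :=
  ∃ ψ : ∀ i, Idx i → ℂ, ∀ f, v f = ∏ i, ψ i (f i)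

/-- A vector on a multipartite system is biseparable if it is a product across some
bipartition of the parties into a nonempty proper subset `M` and its complement. -/
def IsBisepVec {ι : Type*} [Fintype ι] {Idx : ι → Type*} (v : (∀ i, Idx i) → ℂ) : Prop :=
  ∃ M : Finset ι, M.Nonempty ∧ M ≠ Finset.univ ∧
    ∃ (a : ((j : {j : ι // j ∈ M}) → Idx j.1) → ℂ)
      (b : ((j : {j : ι // j ∉ M}) → Idx j.1) → ℂ),
      ∀ f, v f = a (fun j => f j.1) * b (fun j => f j.1)

/-- Fully separable states: finite convex combinations of fully product pure states. -/
def FullySepState {ι : Type*} [Fintype ι] [DecidableEq ι] (Idx : ι → Type*)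
    [∀ i, Fintype (Idx i)] (ρ : Matrix (∀ i, Idx i) (∀ i, Idx i) ℂ) : Prop :=
  ∃ (m : ℕ) (w : Fin m → ℝ) (u : Fin m → (∀ i, Idx i) → ℂ),
    (∀ k, 0 ≤ w k) ∧ (∑ k, w k = 1) ∧
    (∀ k, UnitVec (u k) ∧ IsProdVec (u k)) ∧
    ρ = ∑ k, (w k : ℂ) • vecProj (u k)

/-- Biseparable states: finite convex combinations of biseparable pure states. -/
def BisepState {ι : Type*} [Fintype ι] [DecidableEq ι] (Idx : ι → Type*)
    [∀ i, Fintype (Idx i)] (ρ : Matrix (∀ i, Idx i) (∀ i, Idx i) ℂ) : Prop :=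
  ∃ (m : ℕ) (w : Fin m → ℝ) (u : Fin m → (∀ i, Idx i) → ℂ),
    (∀ k, 0 ≤ w k) ∧ (∑ k, w k = 1) ∧
    (∀ k, UnitVec (u k) ∧ IsBisepVec (u k)) ∧
    ρ = ∑ k, (w k : ℂ) • vecProj (u k)

/-- Robustness of `ρ` relative to the set `S`: the least `s ≥ 0` such that mixing `ρ`
with some state `σ ∈ S` with weight `s` (normalised) lands in `S`. -/
def Robustness {D : Type*} [Fintype D] [DecidableEq D]
    (S : Set (Matrix D D ℂ)) (ρ : Matrix D D ℂ) : ℝ :=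
  sInf {s : ℝ | 0 ≤ s ∧ ∃ σ, IsState σ ∧ σ ∈ S ∧
    (((1 + s)⁻¹ : ℝ) : ℂ) • (ρ + (s : ℂ) • σ) ∈ S}

/-- The three-qubit GHZ vector `(|000⟩ + |111⟩)/√2`. -/
def ghzVec : (Fin 3 → Fin 2) → ℂ := fun f =>
  if f = (fun _ => (0 : Fin 2)) ∨ f = (fun _ => (1 : Fin 2)) then
    (((Real.sqrt 2)⁻¹ : ℝ) : ℂ) else 0

/-- The three-qubit W vector `(|001⟩ + |010⟩ + |100⟩)/√3`. -/
def wVec : (Fin 3 → Fin 2) → ℂ := fun f =>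
  if (∑ i, ((f i : ℕ))) = 1 then (((Real.sqrt 3)⁻¹ : ℝ) : ℂ) else 0

/-!
Lower bound: the functional `witness ρ = Re tr (Zρ)` with
`Z = |000⟩⟨000| + |e₂⟩⟨e₂| - |e₁⟩⟨e₁| + P₁`, where `eₙ` is the sum of the basis vectors of
Hamming weight `n` and `P₁` the projector onto the span of those of weight one, takes values in
`[0, 1]` on fully separable states and the value `-2` on `|W⟩⟨W|`. So if
`(|W⟩⟨W| + sσ)/(1 + s)` is fully separable then `0 ≤ -2 + s · witness σ ≤ -2 + s`. On a product
vector the bounds come from the identity `ab + ac + bc = d (e + f + g)` between its amplitudes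
(`d` at `|000⟩`, `a, b, c` of weight one, `e, f, g` of weight two) and its mirror image under
`0 ↔ 1`.

Upper bound: averaging `|ψ⟩⟨ψ|^⊗3` with `ψ = (α, iᵏβ)` over `k < 4` kills every entry between
basis vectors of different weights and leaves `|α|^(2(3-n)) |β|^(2n)` on all entries between
two of weight `n`. With these fully separable averages `phaseAverage α β`,
`σ = 4/9 · phaseAverage (1/2) (√3/2) + 5/9 · |000⟩⟨000|` satisfies
`(|W⟩⟨W| + 2σ)/3 = 8/9 · phaseAverage (√3/2) (1/2) + 1/9 · |111⟩⟨111|`.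
-/

section

open Complex

section PureStates

variable {D : Type*} [Fintype D]

lemma UnitVec.sum_normSq {v : D → ℂ} (hv : UnitVec v) : ∑ i, normSq (v i) = 1 := by
  have : ∑ i, (normSq (v i) : ℂ) = 1 := by
    rw [← hv]
    exact Finset.sum_congr rfl fun i _ => by rw [normSq_eq_conj_mul_self]; rfl
  exact_mod_cast this

lemma posSemidef_vecProj [DecidableEq D] (v : D → ℂ) : (vecProj v).PosSemidef :=
  posSemidef_vecMulVec_self_star v

lemma trace_vecProj [DecidableEq D] {v : D → ℂ} (hv : UnitVec v) : (vecProj v).trace = 1 := by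
  rw [← hv]
  exact Finset.sum_congr rfl fun i _ => mul_comm _ _

lemma isState_sum_smul_vecProj [DecidableEq D] {m : ℕ} {w : Fin m → ℝ} {u : Fin m → D → ℂ}
    (hw0 : ∀ k, 0 ≤ w k) (hw1 : ∑ k, w k = 1) (hu : ∀ k, UnitVec (u k)) :
    IsState (∑ k, (w k : ℂ) • vecProj (u k)) := by
  refine ⟨posSemidef_sum _ fun k _ =>
    (posSemidef_vecProj (u k)).smul (zero_le_real.mpr (hw0 k)), ?_⟩
  simp only [trace_sum, trace_smul, trace_vecProj (hu _), smul_eq_mul, mul_one]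
  exact_mod_cast hw1

lemma trace_vecProj_mul_vecProj (v u : D → ℂ) :
    (vecProj v * vecProj u).trace = normSq (star v ⬝ᵥ u) := by
  rw [normSq_eq_conj_mul_self]
  simp only [trace, Matrix.diag, mul_apply, vecProj, of_apply, dotProduct, Pi.star_apply,
    map_sum, star_def, map_mul, conj_conj, Finset.sum_mul, Finset.mul_sum]
  rw [Finset.sum_comm]
  exact Finset.sum_congr rfl fun i _ => Finset.sum_congr rfl fun j _ => by ring

lemma trace_diagonal_mul_vecProj [DecidableEq D] (d u : D → ℂ) :
    (diagonal d * vecProj u).trace = ∑ i, d i * normSq (u i) := by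
  simp only [trace, Matrix.diag, diagonal_mul, vecProj, of_apply, star_def, mul_conj]

end PureStates

section FullySeparable

variable {ι : Type*} [Fintype ι] [DecidableEq ι] {Idx : ι → Type*} [∀ i, Fintype (Idx i)]

lemma unitVec_prod {ψ : ∀ i, Idx i → ℂ} (hψ : ∀ i, UnitVec (ψ i)) :
    UnitVec (fun f : ∀ i, Idx i => ∏ i, ψ i (f i)) := by
  have h : ∏ i, ∑ x, star (ψ i x) * ψ i x = 1 := Finset.prod_eq_one fun i _ => hψ i
  rw [Finset.prod_univ_sum] at h
  simpa [UnitVec, star_prod, Finset.prod_mul_distrib] using h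

lemma FullySepState.isState {ρ : Matrix (∀ i, Idx i) (∀ i, Idx i) ℂ}
    (hρ : FullySepState Idx ρ) : IsState ρ := by
  obtain ⟨m, w, u, hw0, hw1, hu, rfl⟩ := hρ
  exact isState_sum_smul_vecProj hw0 hw1 fun k => (hu k).1

lemma fullySepState_average {m : ℕ} (hm : m ≠ 0) {u : Fin m → (∀ i, Idx i) → ℂ}
    (hu : ∀ k, UnitVec (u k) ∧ IsProdVec (u k)) :
    FullySepState Idx ((m : ℂ)⁻¹ • ∑ k, vecProj (u k)) := by
  refine ⟨m, fun _ => (m : ℝ)⁻¹, u, fun _ => by positivity, ?_, hu, ?_⟩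
  · simp [hm]
  · simp [Finset.smul_sum]

lemma FullySepState.smul_add_smul {ρ τ : Matrix (∀ i, Idx i) (∀ i, Idx i) ℂ}
    (hρ : FullySepState Idx ρ) (hτ : FullySepState Idx τ) {p q : ℝ} (hp : 0 ≤ p) (hq : 0 ≤ q)
    (hpq : p + q = 1) : FullySepState Idx ((p : ℂ) • ρ + (q : ℂ) • τ) := by
  obtain ⟨m, w, u, hw0, hw1, hu, rfl⟩ := hρ
  obtain ⟨m', w', u', hw0', hw1', hu', rfl⟩ := hτ
  refine ⟨m + m', Fin.append (p • w) (q • w'), Fin.append u u', ?_, ?_, ?_, ?_⟩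
  · refine Fin.addCases (fun k => ?_) (fun k => ?_) <;>
      simp only [Fin.append_left, Fin.append_right, Pi.smul_apply, smul_eq_mul]
    exacts [mul_nonneg hp (hw0 k), mul_nonneg hq (hw0' k)]
  · simp [Fin.sum_univ_add, ← Finset.mul_sum, hw1, hw1', hpq]
  · exact Fin.addCases (fun k => by simpa using hu k) (fun k => by simpa using hu' k)
  · simp only [Fin.sum_univ_add, Fin.append_left, Fin.append_right, Pi.smul_apply, smul_eq_mul,
      ofReal_mul, mul_smul, Finset.smul_sum]

lemma FullySepState.mem_Icc_of_forall_isProdVec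
    (L : Matrix (∀ i, Idx i) (∀ i, Idx i) ℂ →ₗ[ℝ] ℝ)
    (hL : ∀ u, UnitVec u → IsProdVec u → L (vecProj u) ∈ Set.Icc 0 1)
    {ρ : Matrix (∀ i, Idx i) (∀ i, Idx i) ℂ} (hρ : FullySepState Idx ρ) : L ρ ∈ Set.Icc 0 1 := by
  obtain ⟨m, w, u, hw0, hw1, hu, rfl⟩ := hρ
  simp only [Complex.coe_smul, map_sum, map_smul]
  exact (convex_Icc 0 1).sum_mem (fun k _ => hw0 k) hw1 fun k _ => hL _ (hu k).1 (hu k).2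

end FullySeparable

lemma neg_le_of_witness {D : Type*} {S : Set (Matrix D D ℂ)} (L : Matrix D D ℂ →ₗ[ℝ] ℝ)
    (hL : ∀ σ ∈ S, L σ ∈ Set.Icc 0 1) {ρ σ : Matrix D D ℂ} {s : ℝ} (hs : 0 ≤ s) (hσ : σ ∈ S)
    (hmix : (((1 + s)⁻¹ : ℝ) : ℂ) • (ρ + (s : ℂ) • σ) ∈ S) : -L ρ ≤ s := by
  have hmix0 := (hL _ hmix).1
  have hσ1 := (hL σ hσ).2
  simp only [Complex.coe_smul, map_smul, map_add, smul_eq_mul] at hmix0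
  have : 0 ≤ L ρ + s * L σ := nonneg_of_mul_nonneg_right hmix0 (by positivity)
  nlinarith

lemma sum_fun_fin_succ {M α : Type*} [AddCommMonoid M] [Fintype α] {n : ℕ}
    (F : (Fin (n + 1) → α) → M) : ∑ f, F f = ∑ a, ∑ g : Fin n → α, F (Fin.cons a g) := by
  rw [← (Fin.consEquiv fun _ => α).sum_comp, Fintype.sum_prod_type]
  rfl

lemma sum_fun_fin_three {M α : Type*} [AddCommMonoid M] [Fintype α] (F : (Fin 3 → α) → M) :
    ∑ f, F f = ∑ a, ∑ b, ∑ c, F ![a, b, c] := by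
  simp only [sum_fun_fin_succ, Fintype.sum_unique]
  rfl

def hammingWeight {n : ℕ} (f : Fin n → Fin 2) : ℕ := ∑ i, (f i : ℕ)

lemma hammingWeight_le {n : ℕ} (f : Fin n → Fin 2) : hammingWeight f ≤ n := by
  simpa [hammingWeight] using Finset.sum_le_sum fun i (_ : i ∈ Finset.univ) =>
    Nat.le_of_lt_succ (f i).isLt

lemma hammingWeight_three (a b c : Fin 2) : hammingWeight ![a, b, c] = a + b + c := by
  simp [hammingWeight, Fin.sum_univ_three]

def weightVec (n : ℕ) : (Fin 3 → Fin 2) → ℂ := fun f => if hammingWeight f = n then 1 else 0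

def witnessOp : Matrix (Fin 3 → Fin 2) (Fin 3 → Fin 2) ℂ :=
  vecProj (weightVec 0) + vecProj (weightVec 2) - vecProj (weightVec 1) + diagonal (weightVec 1)

def witness : Matrix (Fin 3 → Fin 2) (Fin 3 → Fin 2) ℂ →ₗ[ℝ] ℝ :=
  reLm ∘ₗ traceLinearMap _ ℝ ℂ ∘ₗ LinearMap.mulLeft ℝ witnessOp

lemma witness_vecProj (u : (Fin 3 → Fin 2) → ℂ) :
    witness (vecProj u) = normSq (u ![0, 0, 0])
      + normSq (u ![0, 1, 1] + u ![1, 0, 1] + u ![1, 1, 0])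
      + (normSq (u ![0, 0, 1]) + normSq (u ![0, 1, 0]) + normSq (u ![1, 0, 0]))
      - normSq (u ![0, 0, 1] + u ![0, 1, 0] + u ![1, 0, 0]) := by
  simp only [witness, witnessOp, LinearMap.coe_comp, Function.comp_apply, LinearMap.mulLeft_apply,
    traceLinearMap_apply, reLm_coe, add_mul, sub_mul, trace_add, trace_sub,
    trace_vecProj_mul_vecProj, trace_diagonal_mul_vecProj]
  simp only [dotProduct, Pi.star_apply, weightVec, RCLike.star_def,
    MonoidWithZeroHom.map_ite_one_zero, ite_mul, one_mul, zero_mul, sum_fun_fin_three,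
    hammingWeight_three, add_assoc, Nat.add_eq_zero_iff, Fin.val_eq_zero_iff, Fin.isValue,
    Fin.sum_univ_two, and_true, one_ne_zero, and_false, ↓reduceIte, add_zero, sum_ite_eq', mem_univ,
    Fin.coe_ofNat_eq_mod, Nat.zero_mod, Nat.mod_succ, zero_add, Nat.reduceEqDiff, Nat.reduceAdd,
    Nat.add_eq_right, OfNat.zero_ne_ofNat, zero_ne_one, OfNat.one_ne_ofNat, add_re, sub_re,
    ofReal_re]
  ring

lemma normSq_add_add_le_of_mul_eq {a b c d m : ℂ} (h : a * b + a * c + b * c = d * m) :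
    normSq (a + b + c) ≤ normSq a + normSq b + normSq c + normSq d + normSq m := by
  simp only [← Complex.sq_norm]
  have hsq : (a + b + c) ^ 2 = a ^ 2 + b ^ 2 + c ^ 2 + 2 * (d * m) := by
    linear_combination 2 * h
  have hdm : 2 * (‖d‖ * ‖m‖) ≤ ‖d‖ ^ 2 + ‖m‖ ^ 2 := by nlinarith [sq_nonneg (‖d‖ - ‖m‖)]
  calc ‖a + b + c‖ ^ 2 = ‖a ^ 2 + b ^ 2 + c ^ 2 + 2 * (d * m)‖ := by rw [← hsq, norm_pow]
    _ ≤ ‖a ^ 2‖ + ‖b ^ 2‖ + ‖c ^ 2‖ + ‖2 * (d * m)‖ := norm_add₄_le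
    _ = ‖a‖ ^ 2 + ‖b‖ ^ 2 + ‖c‖ ^ 2 + 2 * (‖d‖ * ‖m‖) := by simp [norm_pow]
    _ ≤ _ := by linarith

lemma witness_vecProj_mem_Icc {u : (Fin 3 → Fin 2) → ℂ} (hu : UnitVec u) (hp : IsProdVec u) :
    witness (vecProj u) ∈ Set.Icc 0 1 := by
  obtain ⟨ψ, hψ⟩ := hp
  have hψ3 : ∀ a b c, u ![a, b, c] = ψ 0 a * ψ 1 b * ψ 2 c := fun a b c => by
    simp [hψ, Fin.prod_univ_three]
  have hnorm := hu.sum_normSq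
  simp only [sum_fun_fin_three, Fin.sum_univ_two] at hnorm
  have low := normSq_add_add_le_of_mul_eq (a := u ![0, 0, 1]) (b := u ![0, 1, 0])
    (c := u ![1, 0, 0]) (d := u ![0, 0, 0]) (m := u ![0, 1, 1] + u ![1, 0, 1] + u ![1, 1, 0])
    (by simp only [hψ3]; ring)
  have high := normSq_add_add_le_of_mul_eq (a := u ![0, 1, 1]) (b := u ![1, 0, 1])
    (c := u ![1, 1, 0]) (d := u ![1, 1, 1]) (m := u ![0, 0, 1] + u ![0, 1, 0] + u ![1, 0, 0])
    (by simp only [hψ3]; ring)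
  rw [witness_vecProj]
  constructor
  · linarith [normSq_nonneg (u ![0, 0, 0]),
      normSq_nonneg (u ![0, 1, 1] + u ![1, 0, 1] + u ![1, 1, 0])]
  · linarith [normSq_nonneg (u ![0, 0, 0]), normSq_nonneg (u ![1, 1, 1]),
      normSq_nonneg (u ![0, 0, 1] + u ![0, 1, 0] + u ![1, 0, 0])]

lemma witness_vecProj_wVec : witness (vecProj wVec) = -2 := by
  have hval : ∀ a b c : Fin 2, wVec ![a, b, c] =
      if a + b + c = (1 : ℕ) then (((Real.sqrt 3)⁻¹ : ℝ) : ℂ) else 0 := fun a b c => by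
    rw [← hammingWeight_three]; rfl
  have h3 : ((√3 : ℝ) : ℂ)⁻¹ + (√3 : ℂ)⁻¹ + (√3 : ℂ)⁻¹ = ((√3 : ℝ) : ℂ) := by
    field_simp; norm_cast; simp
  rw [witness_vecProj]
  norm_num [hval, h3, normSq_ofReal]

lemma sum_I_pow_mul_conj_I_pow {n m : ℕ} (hn : n ≤ 3) (hm : m ≤ 3) :
    ∑ k : Fin 4, (I ^ (k : ℕ)) ^ n * ((starRingEnd ℂ) I ^ (k : ℕ)) ^ m =
      if n = m then 4 else 0 := by
  interval_cases n <;> interval_cases m <;>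
    norm_num [Fin.sum_univ_four, pow_succ, Complex.ext_iff]

def qubitPow (α β : ℂ) : (Fin 3 → Fin 2) → ℂ := fun f => ∏ j, ![α, β] (f j)

lemma qubitPow_apply (α β : ℂ) (f : Fin 3 → Fin 2) :
    qubitPow α β f = α ^ (3 - hammingWeight f) * β ^ hammingWeight f := by
  obtain ⟨a, b, c, rfl⟩ : ∃ a b c, f = ![a, b, c] := ⟨f 0, f 1, f 2, by ext i; fin_cases i <;> rfl⟩
  rw [hammingWeight_three, qubitPow, Fin.prod_univ_three]
  fin_cases a <;> fin_cases b <;> fin_cases c <;>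
    simp only [Fin.zero_eta, Fin.mk_one, Fin.isValue, Matrix.cons_val_zero, Matrix.cons_val_one,
      Matrix.cons_val_two, Matrix.tail_cons, Matrix.head_cons] <;> ring

lemma unitVec_qubitPow {α β : ℂ} (h : normSq α + normSq β = 1) : UnitVec (qubitPow α β) := by
  refine unitVec_prod fun _ => ?_
  simp only [UnitVec, Fin.sum_univ_two, Matrix.cons_val_zero, Matrix.cons_val_one, star_def,
    ← normSq_eq_conj_mul_self]
  exact_mod_cast h

def weightBlock (c : ℕ → ℂ) : Matrix (Fin 3 → Fin 2) (Fin 3 → Fin 2) ℂ :=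
  of fun f g => if hammingWeight f = hammingWeight g then c (hammingWeight f) else 0

lemma weightBlock_add (c c' : ℕ → ℂ) : weightBlock c + weightBlock c' = weightBlock (c + c') := by
  ext f g
  simp only [weightBlock, Matrix.add_apply, of_apply, Pi.add_apply]
  split_ifs <;> simp

lemma smul_weightBlock (z : ℂ) (c : ℕ → ℂ) : z • weightBlock c = weightBlock (z • c) := by
  ext f g
  simp only [weightBlock, Matrix.smul_apply, of_apply, Pi.smul_apply]
  split_ifs <;> simp

lemma weightBlock_congr {c c' : ℕ → ℂ} (h : ∀ n ≤ 3, c n = c' n) :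
    weightBlock c = weightBlock c' := by
  ext f g
  simp only [weightBlock, of_apply, h _ (hammingWeight_le f)]

lemma vecProj_wVec : vecProj wVec = weightBlock fun n => if n = 1 then 3⁻¹ else 0 := by
  have h3 : (((Real.sqrt 3)⁻¹ : ℝ) : ℂ) * (((Real.sqrt 3)⁻¹ : ℝ) : ℂ) = 3⁻¹ := by
    rw [← ofReal_mul, ← mul_inv, Real.mul_self_sqrt (by norm_num)]
    norm_num
  ext f g
  simp only [vecProj, wVec, weightBlock, of_apply]
  split_ifs <;> simp_all [hammingWeight]

def phaseAverage (α β : ℂ) : Matrix (Fin 3 → Fin 2) (Fin 3 → Fin 2) ℂ :=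
  (4 : ℂ)⁻¹ • ∑ k : Fin 4, vecProj (qubitPow α (I ^ (k : ℕ) * β))

lemma phaseAverage_eq_weightBlock (α β : ℂ) :
    phaseAverage α β = weightBlock fun n => normSq α ^ (3 - n) * normSq β ^ n := by
  ext f g
  have hf := hammingWeight_le f
  have hg := hammingWeight_le g
  simp only [phaseAverage, weightBlock, Matrix.smul_apply, Matrix.sum_apply, vecProj, of_apply,
    qubitPow_apply, star_def, map_mul, map_pow, mul_pow, smul_eq_mul]
  generalize hammingWeight f = n at *
  generalize hammingWeight g = m at *
  calc _ = 4⁻¹ * (α ^ (3 - n) * β ^ n * ((starRingEnd ℂ) α ^ (3 - m) * (starRingEnd ℂ) β ^ m)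
        * ∑ k : Fin 4, (I ^ (k : ℕ)) ^ n * ((starRingEnd ℂ) I ^ (k : ℕ)) ^ m) := by
        simp only [Finset.mul_sum]
        exact Finset.sum_congr rfl fun _ _ => by ring
    _ = _ := by
        rw [sum_I_pow_mul_conj_I_pow hf hg]
        split_ifs with hnm
        · subst hnm
          simp only [normSq_eq_conj_mul_self, mul_pow]
          ring
        · simp

lemma fullySepState_phaseAverage {α β : ℂ} (h : normSq α + normSq β = 1) :
    FullySepState (fun _ : Fin 3 => Fin 2) (phaseAverage α β) := by
  have := fullySepState_average (Idx := fun _ : Fin 3 => Fin 2) (m := 4) (by norm_num)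
    (u := fun k : Fin 4 => qubitPow α (I ^ (k : ℕ) * β)) fun k =>
      ⟨unitVec_qubitPow (by simpa using h), ⟨fun _ => _, fun _ => rfl⟩⟩
  exact_mod_cast this

lemma normSq_half : normSq ((1 / 2 : ℝ) : ℂ) = 1 / 4 := by
  rw [normSq_ofReal]; norm_num

lemma normSq_sqrt_three_div_two : normSq ((√3 / 2 : ℝ) : ℂ) = 3 / 4 := by
  rw [normSq_ofReal, div_mul_div_comm, Real.mul_self_sqrt (by norm_num)]; norm_num

lemma normSq_half_add_normSq_sqrt_three_div_two :
    normSq ((1 / 2 : ℝ) : ℂ) + normSq ((√3 / 2 : ℝ) : ℂ) = 1 := by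
  rw [normSq_half, normSq_sqrt_three_div_two]; norm_num

def wNoise : Matrix (Fin 3 → Fin 2) (Fin 3 → Fin 2) ℂ :=
  ((4 / 9 : ℝ) : ℂ) • phaseAverage ((1 / 2 : ℝ) : ℂ) ((√3 / 2 : ℝ) : ℂ)
    + ((5 / 9 : ℝ) : ℂ) • phaseAverage 1 0

lemma fullySepState_wNoise : FullySepState (fun _ : Fin 3 => Fin 2) wNoise :=
  (fullySepState_phaseAverage normSq_half_add_normSq_sqrt_three_div_two).smul_add_smul
    (fullySepState_phaseAverage (by simp)) (by norm_num) (by norm_num) (by norm_num)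

lemma smul_vecProj_wVec_add_wNoise :
    (((1 + 2)⁻¹ : ℝ) : ℂ) • (vecProj wVec + ((2 : ℝ) : ℂ) • wNoise) =
      ((8 / 9 : ℝ) : ℂ) • phaseAverage ((√3 / 2 : ℝ) : ℂ) ((1 / 2 : ℝ) : ℂ)
        + ((1 / 9 : ℝ) : ℂ) • phaseAverage 0 1 := by
  simp only [wNoise, vecProj_wVec, phaseAverage_eq_weightBlock, smul_add, smul_weightBlock,
    weightBlock_add, normSq_half, normSq_sqrt_three_div_two]
  refine weightBlock_congr fun n hn => ?_
  interval_cases n <;> norm_num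

lemma fullySepState_smul_vecProj_wVec_add_wNoise :
    FullySepState (fun _ : Fin 3 => Fin 2)
      ((((1 + 2)⁻¹ : ℝ) : ℂ) • (vecProj wVec + ((2 : ℝ) : ℂ) • wNoise)) := by
  rw [smul_vecProj_wVec_add_wNoise]
  exact (fullySepState_phaseAverage
    ((add_comm _ _).trans normSq_half_add_normSq_sqrt_three_div_two)).smul_add_smul
      (fullySepState_phaseAverage (by simp)) (by norm_num) (by norm_num) (by norm_num)

end

/-- The robustness of the three-qubit W state relative to the fully separable
states equals 2. -/
theorem robustness_W :
    Robustness {ρ | FullySepState (fun _ : Fin 3 => Fin 2) ρ} (vecProj wVec) = 2 := by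
  refine IsLeast.csInf_eq ⟨⟨zero_le_two, wNoise, fullySepState_wNoise.isState,
    fullySepState_wNoise, fullySepState_smul_vecProj_wVec_add_wNoise⟩, ?_⟩
  rintro s ⟨hs, σ, -, hσ, hmix⟩
  have hwitness := neg_le_of_witness witness
    (fun _ => FullySepState.mem_Icc_of_forall_isProdVec witness fun _ => witness_vecProj_mem_Icc)
    hs hσ hmix
  rwa [witness_vecProj_wVec, neg_neg] at hwitness
end
end

section
/- Hardy's paradox in any dimension: let |ψ⟩ ∈ ℂ^d⊗ℂ^d be a pure bipartite state that is nonseparable and less-than-maximally entangled, in the sense that its Schmidt coefficients include two distinct nonzero values. Then there exist POVMs (E_{a|x})_{a∈{0,1}} on ℂ^d for x∈{0,1} and (F_{b|y})_{b∈{0,1}} on ℂ^d for y∈{0,1} such that the correlations P(a,b|x,y) = ⟨ψ|(E_{a|x}⊗F_{b|y})|ψ⟩ satisfy P(0,0|0,0) > 0 and P(0,1|0,1) = P(1,0|1,0) = P(0,0|1,1) = 0. -/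
open Matrix Finset
open scoped ComplexOrder

attribute [local instance] Classical.propDecidable

noncomputable section

/-- The probability `⟨ψ| (Ea ⊗ Fb) |ψ⟩`. -/
def pairProb {d : ℕ} (ψ : Fin d × Fin d → ℂ)
    (Ea Fb : Matrix (Fin d) (Fin d) ℂ) : ℂ :=
  ∑ q : Fin d × Fin d, ∑ q' : Fin d × Fin d,
    star (ψ q) * Ea q.1 q'.1 * Fb q.2 q'.2 * ψ q'

/-- `lam` is a family of Schmidt coefficients of `ψ`: there are orthonormal families
`u`, `v` with `ψ = ∑ᵢ √(lam i) uᵢ ⊗ vᵢ`. -/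
def SchmidtDecompOf {d : ℕ} (ψ : Fin d × Fin d → ℂ) (lam : Fin d → ℝ) : Prop :=
  ∃ u v : Fin d → Fin d → ℂ,
    (∀ i j, ∑ k, star (u i k) * u j k = if i = j then 1 else 0) ∧
    (∀ i j, ∑ k, star (v i k) * v j k = if i = j then 1 else 0) ∧
    (∀ i, 0 ≤ lam i) ∧
    ∀ q, ψ q = ∑ i, ((Real.sqrt (lam i) : ℝ) : ℂ) * u i q.1 * v i q.2

/-! Write `ψ = ∑ₚ sₚ uₚ ⊗ vₚ` and pick Schmidt indices `i ≠ j` with `a = sᵢ`, `b = sⱼ` positive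
and distinct. When Alice projects onto `e = α uᵢ + β uⱼ`, Bob is left with the unnormalised state
`(⟨e| ⊗ 1) ψ = a α vᵢ + b β vⱼ`, and symmetrically for Bob. So all four Hardy conditions become
conditions on real vectors in the plane. In the coordinates `(uᵢ, uⱼ)` and `(vᵢ, vⱼ)` take
`e₀ ∝ (b², a²)`, `e₁ ∝ (1, -1)`, `f₀ ∝ (b, -a)`, `f₁ ∝ (b, a)`: the state steered by `e₀` is
parallel to `f₁`, the one steered by `f₀` is parallel to `e₁`, the one steered by `e₁` is
orthogonal to `f₁`, and `⟨e₀ ⊗ f₀|ψ⟩ ∝ ab (b² - a²)` is nonzero precisely because `a ≠ b`.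
Each measurement is `{P, 1 - P}` for the projection `P` onto one of these vectors. -/

section Projection

variable {D : Type*} [Fintype D] {e : D → ℂ}

lemma vecProj_eq_vecMulVec (e : D → ℂ) : vecProj e = vecMulVec e (star e) := rfl

lemma vecProj_mulVec (e w : D → ℂ) : vecProj e *ᵥ w = (star e ⬝ᵥ w) • e := by
  rw [vecProj_eq_vecMulVec, vecMulVec_mulVec, op_smul_eq_smul]

lemma vecProj_posSemidef (e : D → ℂ) : (vecProj e).PosSemidef :=
  posSemidef_vecMulVec_self_star e

lemma isStarProjection_vecProj (he : UnitVec e) : IsStarProjection (vecProj e) where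
  isIdempotentElem := by
    rw [IsIdempotentElem, vecProj_eq_vecMulVec, vecMulVec_mul_vecMulVec,
      show star e ⬝ᵥ e = 1 from he, one_smul]
  isSelfAdjoint := by
    rw [IsSelfAdjoint, vecProj_eq_vecMulVec, star_eq_conjTranspose, conjTranspose_vecMulVec,
      star_star]

open scoped MatrixOrder in
lemma one_sub_vecProj_posSemidef [DecidableEq D] (he : UnitVec e) :
    (1 - vecProj e).PosSemidef :=
  nonneg_iff_posSemidef.mp (isStarProjection_vecProj he).one_sub_nonneg

lemma one_sub_vecProj_mulVec_smul [DecidableEq D] (he : UnitVec e) (t : ℂ) :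
    (1 - vecProj e) *ᵥ (t • e) = 0 := by
  rw [sub_mulVec, one_mulVec, vecProj_mulVec, dotProduct_smul, show star e ⬝ᵥ e = 1 from he,
    smul_eq_mul, mul_one, sub_self]

end Projection

section PartialInner

variable {d : ℕ}

/-- `(⟨e| ⊗ 1) ψ`: Bob's unnormalised state after Alice's outcome `e`. -/
def partialInnerLeft (e : Fin d → ℂ) (ψ : Fin d × Fin d → ℂ) : Fin d → ℂ :=
  fun k => ∑ m, star (e m) * ψ (m, k)

/-- `(1 ⊗ ⟨f|) ψ`: Alice's unnormalised state after Bob's outcome `f`. -/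
def partialInnerRight (f : Fin d → ℂ) (ψ : Fin d × Fin d → ℂ) : Fin d → ℂ :=
  fun m => ∑ k, star (f k) * ψ (m, k)

lemma pairProb_vecProj_left (ψ : Fin d × Fin d → ℂ) (e : Fin d → ℂ)
    (F : Matrix (Fin d) (Fin d) ℂ) :
    pairProb ψ (vecProj e) F = star (partialInnerLeft e ψ) ⬝ᵥ (F *ᵥ partialInnerLeft e ψ) := by
  simp only [pairProb, vecProj, partialInnerLeft, dotProduct, mulVec, Fintype.sum_prod_type,
    of_apply, Pi.star_apply, star_sum, star_mul', star_star, Finset.mul_sum, Finset.sum_mul]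
  rw [Finset.sum_comm]
  refine Finset.sum_congr rfl fun k _ => ?_
  refine (Finset.sum_congr rfl fun m _ => Finset.sum_comm).trans ?_
  rw [Finset.sum_comm]
  refine Finset.sum_congr rfl fun k' _ => ?_
  rw [Finset.sum_comm]
  refine Finset.sum_congr rfl fun m' _ => Finset.sum_congr rfl fun m _ => ?_
  ring

lemma pairProb_vecProj_right (ψ : Fin d × Fin d → ℂ) (E : Matrix (Fin d) (Fin d) ℂ)
    (f : Fin d → ℂ) :
    pairProb ψ E (vecProj f) = star (partialInnerRight f ψ) ⬝ᵥ (E *ᵥ partialInnerRight f ψ) := by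
  simp only [pairProb, vecProj, partialInnerRight, dotProduct, mulVec, Fintype.sum_prod_type,
    of_apply, Pi.star_apply, star_sum, star_mul', star_star, Finset.mul_sum, Finset.sum_mul]
  refine Finset.sum_congr rfl fun m _ => ?_
  rw [Finset.sum_comm]
  refine Finset.sum_congr rfl fun m' _ => ?_
  rw [Finset.sum_comm]
  refine Finset.sum_congr rfl fun k' _ => Finset.sum_congr rfl fun k _ => ?_
  ring

lemma pairProb_vecProj_vecProj (ψ : Fin d × Fin d → ℂ) (e f : Fin d → ℂ) :
    pairProb ψ (vecProj e) (vecProj f) = Complex.normSq (star f ⬝ᵥ partialInnerLeft e ψ) := by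
  rw [pairProb_vecProj_left, vecProj_mulVec, dotProduct_smul, smul_eq_mul,
    star_dotProduct (v := partialInnerLeft e ψ), Complex.star_def, Complex.mul_conj]

lemma pairProb_vecProj_one_sub_vecProj {ψ : Fin d × Fin d → ℂ} {e f : Fin d → ℂ}
    (hf : UnitVec f) {t : ℂ} (h : partialInnerLeft e ψ = t • f) :
    pairProb ψ (vecProj e) (1 - vecProj f) = 0 := by
  rw [pairProb_vecProj_left, h, one_sub_vecProj_mulVec_smul hf, dotProduct_zero]

lemma pairProb_one_sub_vecProj_vecProj {ψ : Fin d × Fin d → ℂ} {e f : Fin d → ℂ}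
    (he : UnitVec e) {t : ℂ} (h : partialInnerRight f ψ = t • e) :
    pairProb ψ (1 - vecProj e) (vecProj f) = 0 := by
  rw [pairProb_vecProj_right, h, one_sub_vecProj_mulVec_smul he, dotProduct_zero]

end PartialInner

section SchmidtPlane

variable {d : ℕ}

def OrthonormalRows (u : Fin d → Fin d → ℂ) : Prop :=
  ∀ i j, ∑ k, star (u i k) * u j k = if i = j then 1 else 0

def pairComb (u : Fin d → Fin d → ℂ) (i j : Fin d) (α β : ℝ) : Fin d → ℂ :=
  fun m => α * u i m + β * u j m

variable {u v : Fin d → Fin d → ℂ} {i j : Fin d} {α β γ δ : ℝ}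

lemma smul_pairComb (t : ℝ) :
    (t : ℂ) • pairComb u i j α β = pairComb u i j (t * α) (t * β) := by
  ext m
  simp only [pairComb, Pi.smul_apply, smul_eq_mul, Complex.ofReal_mul]
  ring

lemma star_pairComb_dotProduct_row (hu : OrthonormalRows u) (p : Fin d) :
    star (pairComb u i j α β) ⬝ᵥ u p
      = (if i = p then (α : ℂ) else 0) + (if j = p then (β : ℂ) else 0) := by
  have hstar (r : ℝ) : star (r : ℂ) = r := Complex.conj_ofReal r
  simp only [pairComb, dotProduct, Pi.star_apply, star_add, star_mul', hstar, add_mul,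
    Finset.sum_add_distrib, mul_assoc, ← Finset.mul_sum]
  rw [hu i p, hu j p, mul_ite, mul_ite, mul_one, mul_one, mul_zero, mul_zero]

lemma star_pairComb_dotProduct_pairComb (hu : OrthonormalRows u) (hij : i ≠ j) :
    star (pairComb u i j α β) ⬝ᵥ pairComb u i j γ δ = ((α * γ + β * δ : ℝ) : ℂ) := by
  have hcomb : pairComb u i j γ δ = (γ : ℂ) • u i + (δ : ℂ) • u j := by
    ext m
    simp [pairComb]
  rw [hcomb, dotProduct_add, dotProduct_smul, dotProduct_smul, star_pairComb_dotProduct_row hu,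
    star_pairComb_dotProduct_row hu]
  simp [hij, hij.symm]
  ring

lemma unitVec_pairComb (hu : OrthonormalRows u) (hij : i ≠ j) (h : α ^ 2 + β ^ 2 = 1) :
    UnitVec (pairComb u i j α β) := by
  change star (pairComb u i j α β) ⬝ᵥ pairComb u i j α β = 1
  rw [star_pairComb_dotProduct_pairComb hu hij, ← sq, ← sq, h, Complex.ofReal_one]

variable {s : Fin d → ℝ} {ψ : Fin d × Fin d → ℂ}

lemma partialInnerLeft_pairComb (hu : OrthonormalRows u)
    (hψ : ∀ q, ψ q = ∑ p, (s p : ℂ) * u p q.1 * v p q.2) :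
    partialInnerLeft (pairComb u i j α β) ψ = pairComb v i j (s i * α) (s j * β) := by
  ext k
  have hrow := star_pairComb_dotProduct_row (α := α) (β := β) (i := i) (j := j) hu
  simp only [dotProduct, Pi.star_apply] at hrow
  calc partialInnerLeft (pairComb u i j α β) ψ k
      = ∑ p, (s p : ℂ) * v p k * ∑ m, star (pairComb u i j α β m) * u p m := by
        simp only [partialInnerLeft, hψ, Finset.mul_sum]
        rw [Finset.sum_comm]
        exact Finset.sum_congr rfl fun p _ => Finset.sum_congr rfl fun m _ => by ring
    _ = pairComb v i j (s i * α) (s j * β) k := by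
        simp only [hrow]
        simp only [mul_add, mul_ite, mul_zero, Finset.sum_add_distrib, Finset.sum_ite_eq,
          Finset.mem_univ, if_true, pairComb, Complex.ofReal_mul]
        ring

lemma partialInnerRight_pairComb (hv : OrthonormalRows v)
    (hψ : ∀ q, ψ q = ∑ p, (s p : ℂ) * u p q.1 * v p q.2) :
    partialInnerRight (pairComb v i j γ δ) ψ = pairComb u i j (s i * γ) (s j * δ) := by
  ext m
  have hrow := star_pairComb_dotProduct_row (α := γ) (β := δ) (i := i) (j := j) hv
  simp only [dotProduct, Pi.star_apply] at hrow
  calc partialInnerRight (pairComb v i j γ δ) ψ m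
      = ∑ p, (s p : ℂ) * u p m * ∑ k, star (pairComb v i j γ δ k) * v p k := by
        simp only [partialInnerRight, hψ, Finset.mul_sum]
        rw [Finset.sum_comm]
        exact Finset.sum_congr rfl fun p _ => Finset.sum_congr rfl fun k _ => by ring
    _ = pairComb u i j (s i * γ) (s j * δ) m := by
        simp only [hrow]
        simp only [mul_add, mul_ite, mul_zero, Finset.sum_add_distrib, Finset.sum_ite_eq,
          Finset.mem_univ, if_true, pairComb, Complex.ofReal_mul]
        ring

lemma pairProb_vecProj_pairComb (hu : OrthonormalRows u) (hv : OrthonormalRows v)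
    (hψ : ∀ q, ψ q = ∑ p, (s p : ℂ) * u p q.1 * v p q.2) (hij : i ≠ j) :
    pairProb ψ (vecProj (pairComb u i j α β)) (vecProj (pairComb v i j γ δ))
      = (((s i * α * γ + s j * β * δ) ^ 2 : ℝ) : ℂ) := by
  rw [pairProb_vecProj_vecProj, partialInnerLeft_pairComb hu hψ,
    star_pairComb_dotProduct_pairComb hv hij, Complex.normSq_ofReal]
  push_cast
  ring

end SchmidtPlane

lemma div_sqrt_sq_add_div_sqrt_sq {x y : ℝ} (h : 0 < x ^ 2 + y ^ 2) :
    (x / √(x ^ 2 + y ^ 2)) ^ 2 + (y / √(x ^ 2 + y ^ 2)) ^ 2 = 1 := by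
  rw [div_pow, div_pow, Real.sq_sqrt h.le, ← add_div, div_self h.ne']

section Hardy

variable {d : ℕ}

def AdmitsHardyPOVMs (ψ : Fin d × Fin d → ℂ) : Prop :=
  ∃ (E F : Fin 2 → Fin 2 → Matrix (Fin d) (Fin d) ℂ),
    (∀ x a, (E x a).PosSemidef) ∧ (∀ x, ∑ a, E x a = 1) ∧
    (∀ y b, (F y b).PosSemidef) ∧ (∀ y, ∑ b, F y b = 1) ∧
    0 < pairProb ψ (E 0 0) (F 0 0) ∧
    pairProb ψ (E 0 0) (F 1 1) = 0 ∧
    pairProb ψ (E 1 1) (F 0 0) = 0 ∧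
    pairProb ψ (E 1 0) (F 1 0) = 0

lemma admitsHardyPOVMs_of_unitVec {ψ : Fin d × Fin d → ℂ} {e₀ e₁ f₀ f₁ : Fin d → ℂ}
    (he₀ : UnitVec e₀) (he₁ : UnitVec e₁) (hf₀ : UnitVec f₀) (hf₁ : UnitVec f₁)
    (h₀₀ : 0 < pairProb ψ (vecProj e₀) (vecProj f₀))
    (h₀₁ : pairProb ψ (vecProj e₀) (1 - vecProj f₁) = 0)
    (h₁₀ : pairProb ψ (1 - vecProj e₁) (vecProj f₀) = 0)
    (h₁₁ : pairProb ψ (vecProj e₁) (vecProj f₁) = 0) :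
    AdmitsHardyPOVMs ψ := by
  refine ⟨![![vecProj e₀, 1 - vecProj e₀], ![vecProj e₁, 1 - vecProj e₁]],
    ![![vecProj f₀, 1 - vecProj f₀], ![vecProj f₁, 1 - vecProj f₁]],
    ?_, ?_, ?_, ?_, h₀₀, h₀₁, h₁₀, h₁₁⟩
  · intro x a
    fin_cases x <;> fin_cases a
    exacts [vecProj_posSemidef e₀, one_sub_vecProj_posSemidef he₀,
      vecProj_posSemidef e₁, one_sub_vecProj_posSemidef he₁]
  · intro x
    fin_cases x <;> simp
  · intro y b
    fin_cases y <;> fin_cases b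
    exacts [vecProj_posSemidef f₀, one_sub_vecProj_posSemidef hf₀,
      vecProj_posSemidef f₁, one_sub_vecProj_posSemidef hf₁]
  · intro y
    fin_cases y <;> simp

theorem admitsHardyPOVMs_of_schmidt_pair {u v : Fin d → Fin d → ℂ} (hu : OrthonormalRows u)
    (hv : OrthonormalRows v) {s : Fin d → ℝ} {ψ : Fin d × Fin d → ℂ}
    (hψ : ∀ q, ψ q = ∑ p, (s p : ℂ) * u p q.1 * v p q.2) {i j : Fin d} (hij : i ≠ j)
    (hi : 0 < s i) (hj : 0 < s j) (hne : s i ≠ s j) :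
    AdmitsHardyPOVMs ψ := by
  set a := s i with ha
  set b := s j with hb
  set M := √(b ^ 2 + a ^ 2)
  set N := √((b ^ 2) ^ 2 + (a ^ 2) ^ 2)
  have hM : 0 < M := by positivity
  have he₀ : UnitVec (pairComb u i j (b ^ 2 / N) (a ^ 2 / N)) :=
    unitVec_pairComb hu hij (div_sqrt_sq_add_div_sqrt_sq (by positivity))
  have he₁ : UnitVec (pairComb u i j (1 / √2) (-1 / √2)) := by
    refine unitVec_pairComb hu hij ?_
    rw [div_pow, div_pow, Real.sq_sqrt zero_le_two]
    norm_num
  have hf₀ : UnitVec (pairComb v i j (b / M) (-a / M)) := by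
    refine unitVec_pairComb hv hij ?_
    rw [neg_div, neg_sq]
    exact div_sqrt_sq_add_div_sqrt_sq (by positivity)
  have hf₁ : UnitVec (pairComb v i j (b / M) (a / M)) :=
    unitVec_pairComb hv hij (div_sqrt_sq_add_div_sqrt_sq (by positivity))
  refine admitsHardyPOVMs_of_unitVec he₀ he₁ hf₀ hf₁ ?_ ?_ ?_ ?_
  · rw [pairProb_vecProj_pairComb hu hv hψ hij, Complex.zero_lt_real]
    have hamp : a * (b ^ 2 / N) * (b / M) + b * (a ^ 2 / N) * (-a / M)
        = a * b * (b - a) * (b + a) / (N * M) := by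
      field_simp
      ring
    rw [hamp]
    positivity
  · refine pairProb_vecProj_one_sub_vecProj hf₁ (t := ((a * b * M / N : ℝ) : ℂ)) ?_
    rw [partialInnerLeft_pairComb hu hψ, ← ha, ← hb, smul_pairComb]
    congr 1 <;> field_simp
  · refine pairProb_one_sub_vecProj_vecProj he₁ (t := ((a * b * √2 / M : ℝ) : ℂ)) ?_
    rw [partialInnerRight_pairComb hv hψ, ← ha, ← hb, smul_pairComb]
    congr 1 <;> field_simp
  · rw [pairProb_vecProj_pairComb hu hv hψ hij, Complex.ofReal_eq_zero]
    ring

end Hardy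

theorem hardy_paradox_any_dimension_general (d : ℕ) (ψ : Fin d × Fin d → ℂ)
    (hltm : ∃ lam : Fin d → ℝ, SchmidtDecompOf ψ lam ∧
      ∃ i j : Fin d, 0 < lam i ∧ 0 < lam j ∧ lam i ≠ lam j) :
    ∃ (E F : Fin 2 → Fin 2 → Matrix (Fin d) (Fin d) ℂ),
      (∀ x a, (E x a).PosSemidef) ∧ (∀ x, ∑ a, E x a = 1) ∧
      (∀ y b, (F y b).PosSemidef) ∧ (∀ y, ∑ b, F y b = 1) ∧
      0 < pairProb ψ (E 0 0) (F 0 0) ∧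
      pairProb ψ (E 0 0) (F 1 1) = 0 ∧
      pairProb ψ (E 1 1) (F 0 0) = 0 ∧
      pairProb ψ (E 1 0) (F 1 0) = 0 := by
  obtain ⟨lam, ⟨u, v, hu, hv, -, hrep⟩, i, j, hi, hj, hne⟩ := hltm
  have hij : i ≠ j := fun h => hne (congrArg lam h)
  have hsqrt_ne : √(lam i) ≠ √(lam j) := by
    rwa [Ne, Real.sqrt_inj hi.le hj.le]
  exact admitsHardyPOVMs_of_schmidt_pair (s := fun p => √(lam p)) hu hv hrep hij
    (Real.sqrt_pos.mpr hi) (Real.sqrt_pos.mpr hj) hsqrt_ne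

/-- **Hardy's paradox in any dimension.** Every nonseparable, less-than-maximally
entangled pure bipartite state (i.e. one whose Schmidt coefficients include two distinct
nonzero values) admits 2-input 2-output POVMs realising Hardy's paradox. -/
theorem hardy_paradox_any_dimension (d : ℕ) (ψ : Fin d × Fin d → ℂ) (hψ : UnitVec ψ)
    (hent : ¬ ∃ (α β : Fin d → ℂ), ∀ q : Fin d × Fin d, ψ q = α q.1 * β q.2)
    (hltm : ∃ lam : Fin d → ℝ, SchmidtDecompOf ψ lam ∧
      ∃ i j : Fin d, 0 < lam i ∧ 0 < lam j ∧ lam i ≠ lam j) :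
    ∃ (E F : Fin 2 → Fin 2 → Matrix (Fin d) (Fin d) ℂ),
      (∀ x a, (E x a).PosSemidef) ∧ (∀ x, ∑ a, E x a = 1) ∧
      (∀ y b, (F y b).PosSemidef) ∧ (∀ y, ∑ b, F y b = 1) ∧
      0 < pairProb ψ (E 0 0) (F 0 0) ∧
      pairProb ψ (E 0 0) (F 1 1) = 0 ∧
      pairProb ψ (E 1 1) (F 0 0) = 0 ∧
      pairProb ψ (E 1 0) (F 1 0) = 0 :=
  hardy_paradox_any_dimension_general d ψ hltm
end
end
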